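/- arXiv:2009.01321 — 4 statements merged into one kernel-verified Lean document; each statement's English description precedes it below -/
import Mathlib

section
/- Let Q be an even lattice. Then there exists a bimultiplicative function ε : Q × Q → {±1} such that ε(α, α) = (−1)^{|α|²(|α|²+1)/2} for all α ∈ Q. -/
/-! Since `|α|²` is even, `q α := |α|² / 2` is an integral quadratic form, and on a free
`ℤ`-module every quadratic form is `q α = C α α` for some (non-symmetric) bilinear form `C`,
e.g. the upper-triangular one in a basis. Then `ε α β := (-1) ^ C α β` is bimultiplicative, and
`|α|²(|α|²+1)/2 = q α (2 q α + 1) ≡ q α (mod 2)` gives the diagonal values. -/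

namespace LinearMap

variable {M : Type*} [AddCommGroup M] (B : M →ₗ[ℤ] M →ₗ[ℤ] ℤ) (heven : ∀ x, 2 ∣ B x x)

include heven in
lemma two_mul_polar_half_diag (x y : M) :
    2 * QuadraticMap.polar (fun z => B z z / 2) x y = B x y + B y x := by
  have half (z : M) : 2 * (B z z / 2) = B z z := Int.mul_ediv_cancel' (heven z)
  rw [QuadraticMap.polar, mul_sub, mul_sub, half, half, half]
  simp only [map_add, add_apply]
  ring

def halfDiag : QuadraticMap ℤ M ℤ :=
  QuadraticMap.ofPolar (fun z => B z z / 2)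
    (fun a x => mul_left_cancel₀ two_ne_zero <| by
      rw [Int.mul_ediv_cancel' (heven _), smul_eq_mul, mul_left_comm,
        Int.mul_ediv_cancel' (heven x)]
      simp only [map_smul, smul_apply, smul_eq_mul]
      ring)
    (fun x x' y => mul_left_cancel₀ two_ne_zero <| by
      rw [mul_add, two_mul_polar_half_diag B heven, two_mul_polar_half_diag B heven,
        two_mul_polar_half_diag B heven, map_add, map_add, add_apply]
      ring)
    (fun a x y => mul_left_cancel₀ two_ne_zero <| by
      rw [smul_eq_mul, mul_left_comm, two_mul_polar_half_diag B heven,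
        two_mul_polar_half_diag B heven, map_smul, map_smul, smul_apply]
      simp only [smul_eq_mul]
      ring)

@[simp]
lemma halfDiag_apply (x : M) : halfDiag B heven x = B x x / 2 := rfl

end LinearMap

lemma Int.negOnePow_mul_two_mul_add_one (m : ℤ) :
    (m * (2 * m + 1)).negOnePow = m.negOnePow := by
  rw [mul_add, mul_one, Int.negOnePow_add, mul_left_comm, Int.negOnePow_two_mul, one_mul]

theorem exists_epsilon_bimultiplicative_general
    (Q : Type*) [AddCommGroup Q] [Module.Free ℤ Q]
    (B : Q →ₗ[ℤ] Q →ₗ[ℤ] ℤ)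
    (heven : ∀ α : Q, 2 ∣ B α α) :
    ∃ ε : Q → Q → ℤˣ,
      (∀ α β γ : Q, ε (α + β) γ = ε α γ * ε β γ) ∧
      (∀ α β γ : Q, ε α (β + γ) = ε α β * ε α γ) ∧
      (∀ α : Q, ε α α = (-1 : ℤˣ) ^ (B α α * (B α α + 1) / 2)) := by
  obtain ⟨C, hC⟩ := LinearMap.BilinMap.toQuadraticMap_surjective (B.halfDiag heven)
  refine ⟨fun α β => (C α β).negOnePow, fun α β γ => ?_, fun α β γ => ?_, fun α => ?_⟩
    <;> dsimp only
  · rw [map_add, LinearMap.add_apply, Int.negOnePow_add]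
  · rw [map_add, Int.negOnePow_add]
  · have hCα : C α α = B α α / 2 := by
      rw [← LinearMap.BilinMap.toQuadraticMap_apply, hC, LinearMap.halfDiag_apply]
    obtain ⟨m, hm⟩ := heven α
    have hexp : B α α * (B α α + 1) / 2 = m * (2 * m + 1) := by
      rw [hm, mul_assoc, Int.mul_ediv_cancel_left _ two_ne_zero]
    rw [← Int.negOnePow_def, hexp, Int.negOnePow_mul_two_mul_add_one, hCα, hm,
      Int.mul_ediv_cancel_left _ two_ne_zero]

/-- on an even lattice `Q` (a finite-rank free abelian group with a
symmetric integer-valued bilinear form `B` such that `B α α` is even), there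
exists a bimultiplicative function `ε : Q × Q → {±1}` with
`ε(α,α) = (−1)^{|α|²(|α|²+1)/2}`. -/
theorem exists_epsilon_bimultiplicative
    (Q : Type*) [AddCommGroup Q] [Module.Free ℤ Q] [Module.Finite ℤ Q]
    (B : Q →ₗ[ℤ] Q →ₗ[ℤ] ℤ)
    (hsymm : ∀ α β : Q, B α β = B β α)
    (heven : ∀ α : Q, 2 ∣ B α α) :
    ∃ ε : Q → Q → ℤˣ,
      (∀ α β γ : Q, ε (α + β) γ = ε α γ * ε β γ) ∧
      (∀ α β γ : Q, ε α (β + γ) = ε α β * ε α γ) ∧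
      (∀ α : Q, ε α α = (-1 : ℤˣ) ^ (B α α * (B α α + 1) / 2)) :=
  exists_epsilon_bimultiplicative_general Q B heven
end

section
/- Let Q be an even lattice, ε : Q × Q → {±1} a bimultiplicative function satisfying ε(α, α) = (−1)^{|α|²(|α|²+1)/2} for all α ∈ Q, and σ an automorphism of Q of finite order preserving the bilinear form, i.e., (σα|σβ) = (α|β) for all α, β ∈ Q. Then there exists a function η : Q → {±1} such that η(α) η(β) ε(α, β) = η(α+β) ε(σα, σβ) for all α, β ∈ Q, and moreover η can be chosen so that η(α) = 1 whenever σα = α. -/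
/-!
The ratio `f(α, β) = ε(σα, σβ) ε(α, β)` is bimultiplicative and alternating, since `σ` preserves
`|α|²` and hence `ε(α, α)`; being `±1`-valued it is also symmetric. On a free module such a form is
the polarization of a quadratic refinement `q` (the strictly upper triangular part of its Gram
matrix), and any `η` with `η(α + β) = η(α) η(β) f(α, β)` solves the cocycle equation. As `f` is
trivial on the fixed sublattice `F`, `q` is a character on `F`; since `Q ⧸ F ≅ (σ - 1) Q` is free,
`F` has a linear retraction `π`, and `η(α) = q(α) q(π α)` is moreover trivial on `F`.
-/
section BilinearMap

variable {R M N ι : Type*} [CommRing R] [AddCommGroup M] [Module R M] [AddCommGroup N]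
  [Module R N] [Finite ι] {B : M →ₗ[R] M →ₗ[R] N}

theorem LinearMap.exists_add_flip_eq_of_isAlt (b : Module.Basis ι R M) (hB : B.IsAlt)
    (hsymm : B.flip = B) :
    ∃ U : M →ₗ[R] M →ₗ[R] N, U + U.flip = B := by
  classical
  cases nonempty_fintype ι
  let _ : LinearOrder ι := LinearOrder.lift' _ (Fintype.equivFin ι).injective
  refine ⟨∑ i, ∑ j ∈ Finset.univ.filter (i < ·),
    (b.coord i).smulRight ((b.coord j).smulRight (B (b i) (b j))), ext_basis b b fun k l => ?_⟩
  rcases lt_trichotomy k l with h | rfl | h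
  · simp [Finsupp.single_apply, h, h.not_gt]
  · simp [Finsupp.single_apply, hB (b k)]
  · simpa [Finsupp.single_apply, h, h.not_gt] using
      DFunLike.congr_fun (DFunLike.congr_fun hsymm (b k)) (b l)

theorem QuadraticMap.exists_polarBilin_eq_of_isAlt (b : Module.Basis ι R M) (hB : B.IsAlt)
    (hsymm : B.flip = B) :
    ∃ q : QuadraticMap R M N, q.polarBilin = B := by
  obtain ⟨U, hU⟩ := LinearMap.exists_add_flip_eq_of_isAlt b hB hsymm
  exact ⟨LinearMap.BilinMap.toQuadraticMap U,
    by rw [LinearMap.BilinMap.polarBilin_toQuadraticMap, hU]⟩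

end BilinearMap

theorem exists_quadratic_refinement {P G : Type*} [AddCommGroup P] [Module.Free ℤ P]
    [Module.Finite ℤ P] [CommGroup G] (g : P → P → G)
    (h1 : ∀ x y z, g (x + y) z = g x z * g y z) (h2 : ∀ x y z, g x (y + z) = g x y * g x z)
    (halt : ∀ x, g x x = 1) (hsymm : ∀ x y, g y x = g x y) :
    ∃ q : P → G, ∀ x y, q (x + y) = q x * q y * g x y := by
  let B : P →ₗ[ℤ] P →ₗ[ℤ] Additive G := LinearMap.mk₂ ℤ (fun x y => Additive.ofMul (g x y)) h1
    (fun c x y => map_zsmul (AddMonoidHom.mk' (fun x => Additive.ofMul (g x y)) (h1 · · y)) c x) h2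
    (fun c x y => map_zsmul (AddMonoidHom.mk' (fun y => Additive.ofMul (g x y)) (h2 x)) c y)
  obtain ⟨q, hq⟩ := QuadraticMap.exists_polarBilin_eq_of_isAlt (Module.Free.chooseBasis ℤ P)
    (B := B) halt (LinearMap.ext₂ hsymm)
  refine ⟨fun x => (q x).toMul, fun x y => ?_⟩
  have hq_add : q (x + y) = q x + q y + Additive.ofMul (g x y) := by
    rw [← sub_eq_iff_eq_add', ← sub_sub, ← QuadraticMap.polar,
      ← QuadraticMap.polarBilin_apply_apply, hq]
    rfl
  simp [hq_add]

theorem Int.units_bimul_comm_of_alternating {P : Type*} [AddCommGroup P] (g : P → P → ℤˣ)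
    (h1 : ∀ x y z, g (x + y) z = g x z * g y z) (h2 : ∀ x y z, g x (y + z) = g x y * g x z)
    (halt : ∀ x, g x x = 1) (x y : P) : g y x = g x y := by
  have h := halt (x + y)
  rw [h1, h2, h2, halt, halt, one_mul, mul_one, mul_eq_one_iff_eq_inv, Int.units_inv_eq_self] at h
  exact h.symm

theorem LinearMap.exists_retraction_onto_ker {R M N : Type*} [Ring R] [AddCommGroup M]
    [Module R M] [AddCommGroup N] [Module R N] (φ : M →ₗ[R] N)
    [Module.Projective R (LinearMap.range φ)] :
    ∃ π : M →ₗ[R] M, (∀ x, φ (π x) = 0) ∧ ∀ x, φ x = 0 → π x = x := by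
  obtain ⟨s, hs⟩ := φ.rangeRestrict.exists_rightInverse_of_surjective φ.range_rangeRestrict
  have hφs : ∀ x, φ (s (φ.rangeRestrict x)) = φ x := fun x =>
    congr_arg Subtype.val (DFunLike.congr_fun hs (φ.rangeRestrict x))
  refine ⟨LinearMap.id - s ∘ₗ φ.rangeRestrict, fun x => by simp [hφs], fun x hx => ?_⟩
  have : φ.rangeRestrict x = 0 := Subtype.ext hx
  simp [this]

theorem exists_eta_general
    (Q : Type*) [AddCommGroup Q] [Module.Free ℤ Q] [Module.Finite ℤ Q]
    (B : Q →ₗ[ℤ] Q →ₗ[ℤ] ℤ)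
    (ε : Q → Q → ℤˣ)
    (hb1 : ∀ α β γ : Q, ε (α + β) γ = ε α γ * ε β γ)
    (hb2 : ∀ α β γ : Q, ε α (β + γ) = ε α β * ε α γ)
    (hdiag : ∀ α : Q, ε α α = (-1 : ℤˣ) ^ (B α α * (B α α + 1) / 2))
    (σ : AddAut Q)
    (hform : ∀ α β : Q, B (σ α) (σ β) = B α β) :
    ∃ η : Q → ℤˣ,
      (∀ α β : Q, η α * η β * ε α β = η (α + β) * ε (σ α) (σ β)) ∧
      (∀ α : Q, σ α = α → η α = 1) := by
  set f : Q → Q → ℤˣ := fun α β => ε (σ α) (σ β) * ε α β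
  have hf1 : ∀ α β γ, f (α + β) γ = f α γ * f β γ := fun α β γ => by
    simp only [f, map_add, hb1, mul_mul_mul_comm]
  have hf2 : ∀ α β γ, f α (β + γ) = f α β * f α γ := fun α β γ => by
    simp only [f, map_add, hb2, mul_mul_mul_comm]
  have hfalt : ∀ α, f α α = 1 := fun α => by
    simp only [f, hdiag, hform, Int.units_mul_self]
  have hfix : ∀ α β, σ α = α → σ β = β → f α β = 1 := fun α β hα hβ => by
    simp only [f, hα, hβ, Int.units_mul_self]
  obtain ⟨q, hq⟩ := exists_quadratic_refinement f hf1 hf2 hfalt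
    (Int.units_bimul_comm_of_alternating f hf1 hf2 hfalt)
  obtain ⟨π, hπ_fixed, hπ_id⟩ :=
    (σ.toAddMonoidHom.toIntLinearMap - LinearMap.id).exists_retraction_onto_ker
  simp only [AddEquiv.toAddMonoidHom_eq_coe, LinearMap.sub_apply, AddMonoidHom.coe_toIntLinearMap,
    AddMonoidHom.coe_coe, LinearMap.id_coe, id_eq, sub_eq_zero] at hπ_fixed hπ_id
  refine ⟨fun α => q α * q (π α), fun α β => ?_, fun α hα => ?_⟩
  · have hε : f α β * ε (σ α) (σ β) = ε α β := by
      rw [mul_right_comm, Int.units_mul_self, one_mul]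
    dsimp only
    rw [map_add, hq, hq, hfix _ _ (hπ_fixed α) (hπ_fixed β), ← hε]
    ac_rfl
  · dsimp only
    rw [hπ_id α hα, Int.units_mul_self]

/-- for an even lattice `Q`, a bimultiplicative `ε` with
`ε(α,α) = (−1)^{|α|²(|α|²+1)/2}`, and a finite-order automorphism `σ` of `Q`
preserving the bilinear form, there exists `η : Q → {±1}` with
`η(α) η(β) ε(α,β) = η(α+β) ε(σα,σβ)`, which moreover satisfies `η(α) = 1`
whenever `σα = α`. -/
theorem exists_eta
    (Q : Type*) [AddCommGroup Q] [Module.Free ℤ Q] [Module.Finite ℤ Q]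
    (B : Q →ₗ[ℤ] Q →ₗ[ℤ] ℤ)
    (hsymm : ∀ α β : Q, B α β = B β α)
    (heven : ∀ α : Q, 2 ∣ B α α)
    (ε : Q → Q → ℤˣ)
    (hb1 : ∀ α β γ : Q, ε (α + β) γ = ε α γ * ε β γ)
    (hb2 : ∀ α β γ : Q, ε α (β + γ) = ε α β * ε α γ)
    (hdiag : ∀ α : Q, ε α α = (-1 : ℤˣ) ^ (B α α * (B α α + 1) / 2))
    (σ : AddAut Q) (N : ℕ) (hN : 0 < N) (hord : N • σ = 0)
    (hform : ∀ α β : Q, B (σ α) (σ β) = B α β) :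
    ∃ η : Q → ℤˣ,
      (∀ α β : Q, η α * η β * ε α β = η (α + β) * ε (σ α) (σ β)) ∧
      (∀ α : Q, σ α = α → η α = 1) :=
  exists_eta_general Q B ε hb1 hb2 hdiag σ hform
end

section
/- For each 1 ≤ i ≤ r, m₀ ∈ ℤ and m ∈ ℤ^r, the linear endomorphism D of L̂'_{r+1,k}(g) determined by D(a ⊗ t₀^{n₀} t^n) = n_i a ⊗ t₀^{m₀+n₀} t^{m+n} and D(K_j ⊗ t₀^{n₀} t^n) = n_i K_j ⊗ t₀^{m₀+n₀} t^{m+n} + δ_{i,j} Σ_{l=0}^r m_l K_l ⊗ t₀^{m₀+n₀} t^{m+n} (for 0 ≤ j ≤ r) is well defined on the quotient K, and D is a derivation of the Lie algebra L̂'_{r+1,k}(g): D[x,y] = [Dx, y] + [x, Dy] for all x, y ∈ L̂'_{r+1,k}(g). -/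
/-- Exponents of monomials `t₀^{m₀} t^m = t₀^{m₀} t₁^{m₁} ⋯ t_r^{m_r}`. -/
abbrev TorIdx (r : ℕ) := ℤ × (Fin r → ℤ)

/-- The free module `⊕_{i=0}^r ℂK_i ⊗ O`, with basis `K_i ⊗ t₀^{m₀} t^m`
indexed by `(i, (m₀, m))`. -/
abbrev CF (r : ℕ) := (Fin (r + 1) × TorIdx r) →₀ ℂ

/-- The element `Σ_{l=0}^r c_l K_l ⊗ t₀^{e₀} t^e` where `(c_0, c_1, …, c_r) =
(m₀, m₁, …, m_r)`. -/
noncomputable def consSum (r : ℕ) (m₀ : ℤ) (m : Fin r → ℤ) (e₀ : ℤ) (e : Fin r → ℤ) : CF r :=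
  ∑ l : Fin (r + 1), Finsupp.single (l, (e₀, e)) (((Fin.cons m₀ m : Fin (r + 1) → ℤ) l : ℤ) : ℂ)

/-- The element `Σ_{i=0}^r m_i K_i ⊗ t₀^{m₀} t^m` spanning the relations. -/
noncomputable def relElem (r : ℕ) (m₀ : ℤ) (m : Fin r → ℤ) : CF r :=
  consSum r m₀ m m₀ m

/-- The subspace of relations, so that `K = CF r ⧸ RR r`. -/
noncomputable def RR (r : ℕ) : Submodule ℂ (CF r) :=
  Submodule.span ℂ {x : CF r | ∃ (m₀ : ℤ) (m : Fin r → ℤ), x = relElem r m₀ m}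

/-- The `g ⊗ O`-component of the bracket:
`[a ⊗ t₀^{m₀}t^m, b ⊗ t₀^{n₀}t^n] ↦ [a,b] ⊗ t₀^{m₀+n₀}t^{m+n}`, where `g ⊗ O`
is modelled as finitely supported functions `TorIdx r →₀ g`. -/
noncomputable def ggPart (r : ℕ) (g : Type*) [LieRing g] [LieAlgebra ℂ g]
    (f f' : TorIdx r →₀ g) : TorIdx r →₀ g :=
  f.sum fun p a => f'.sum fun q b => Finsupp.single (p.1 + q.1, p.2 + q.2) ⁅a, b⁆

/-- The central component of the bracket (before passing to the quotient `K`):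
`k(a|b) Σ_{i=0}^r m_i K_i ⊗ t₀^{m₀+n₀} t^{m+n}`. -/
noncomputable def centPart (r : ℕ) (g : Type*) [LieRing g] [LieAlgebra ℂ g]
    (k : ℂ) (B : g →ₗ[ℂ] g →ₗ[ℂ] ℂ) (f f' : TorIdx r →₀ g) : CF r :=
  f.sum fun p a => f'.sum fun q b =>
    (k * B a b) • consSum r p.1 p.2 (p.1 + q.1) (p.2 + q.2)

/-- The bracket of the toroidal Lie algebra `L̂'_{r+1,k}(g) = (g ⊗ O) ⊕ K` of
level `k`, where `K = CF r ⧸ RR r` is central. -/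
noncomputable def torBracket (r : ℕ) (g : Type*) [LieRing g] [LieAlgebra ℂ g]
    (k : ℂ) (B : g →ₗ[ℂ] g →ₗ[ℂ] ℂ)
    (x y : (TorIdx r →₀ g) × (CF r ⧸ RR r)) :
    (TorIdx r →₀ g) × (CF r ⧸ RR r) :=
  (ggPart r g x.1 y.1, (RR r).mkQ (centPart r g k B x.1 y.1))

/-- The action of the derivation `d_i ⊗ t₀^{m₀} t^m` on `g ⊗ O`:
`a ⊗ t₀^{n₀} t^n ↦ n_i a ⊗ t₀^{m₀+n₀} t^{m+n}`. -/
noncomputable def derG (r : ℕ) (g : Type*) [LieRing g] [LieAlgebra ℂ g]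
    (m₀ : ℤ) (m : Fin r → ℤ) (i : Fin r) (f : TorIdx r →₀ g) : TorIdx r →₀ g :=
  f.sum fun q a => Finsupp.single (m₀ + q.1, m + q.2) (((q.2 i : ℤ) : ℂ) • a)

/-- The action of the derivation `d_i ⊗ t₀^{m₀} t^m` on the free module
`⊕_{j=0}^r ℂK_j ⊗ O`:
`K_j ⊗ t₀^{n₀} t^n ↦ n_i K_j ⊗ t₀^{m₀+n₀} t^{m+n}
  + δ_{i,j} Σ_{l=0}^r m_l K_l ⊗ t₀^{m₀+n₀} t^{m+n}`
(here `j = 0, …, r`, and the index `i ∈ {1, …, r}` corresponds to `i.succ`). -/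
noncomputable def derK (r : ℕ) (m₀ : ℤ) (m : Fin r → ℤ) (i : Fin r) (u : CF r) : CF r :=
  u.sum fun jq c => c •
    (Finsupp.single (jq.1, (m₀ + jq.2.1, m + jq.2.2)) ((jq.2.2 i : ℤ) : ℂ)
      + (if jq.1 = i.succ then consSum r m₀ m (m₀ + jq.2.1) (m + jq.2.2) else 0))

/-!
Every map involved is bilinear resp. linear, so it suffices to check the Leibniz rule on
monomials `a ⊗ t^p`, `b ⊗ t^q` (writing `t^p` for `t₀^{p₀} t^{p'}`). On the `g ⊗ O` part it is
`(p + q)_i = p_i + q_i`. On the central part it is linearity of `Σ_l c_l K_l ⊗ t^e` in the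
coefficient vector `c`:
`(p + q)_i Σ p_l K_l + p_i Σ m_l K_l = p_i Σ (m + p)_l K_l + q_i Σ p_l K_l`, all at `t^{m+p+q}`.
The same linearity gives `D (Σ n_l K_l ⊗ t^n) = n_i Σ (m + n)_l K_l ⊗ t^{m+n}`, so `D`
preserves the relations.
-/

namespace Finsupp

variable {R α β M N P : Type*} [CommSemiring R] [AddCommMonoid M] [Module R M]
  [AddCommMonoid N] [Module R N] [AddCommMonoid P] [Module R P]

noncomputable def lsum₂ (φ : α → β → M →ₗ[R] N →ₗ[R] P) :
    (α →₀ M) →ₗ[R] (β →₀ N) →ₗ[R] P :=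
  lsum R fun p => (lsum R fun q => (φ p q).flip).flip

theorem lsum₂_apply (φ : α → β → M →ₗ[R] N →ₗ[R] P) (f : α →₀ M) (f' : β →₀ N) :
    lsum₂ φ f f' = f.sum fun p a => f'.sum fun q b => φ p q a b := by
  simp [lsum₂, lsum_apply, Finsupp.sum, LinearMap.sum_apply]

theorem lsum₂_single (φ : α → β → M →ₗ[R] N →ₗ[R] P) (p : α) (a : M) (q : β) (b : N) :
    lsum₂ φ (single p a) (single q b) = φ p q a b := by
  simp [lsum₂]

theorem leibniz_of_single {Φ : (α →₀ M) →ₗ[R] (α →₀ M) →ₗ[R] P}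
    {δ : (α →₀ M) →ₗ[R] (α →₀ M)} {D : P →ₗ[R] P}
    (h : ∀ p a q b, D (Φ (single p a) (single q b))
      = Φ (δ (single p a)) (single q b) + Φ (single p a) (δ (single q b)))
    (f f' : α →₀ M) : D (Φ f f') = Φ (δ f) f' + Φ f (δ f') := by
  have : Φ.compr₂ D = Φ ∘ₗ δ + Φ.compl₂ δ :=
    lhom_ext fun p a => lhom_ext fun q b => by simpa using h p a q b
  simpa using LinearMap.congr_fun₂ this f f'

end Finsupp

section

variable {r : ℕ}

theorem consSum_add (a a' e₀ : ℤ) (b b' e : Fin r → ℤ) :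
    consSum r (a + a') (b + b') e₀ e = consSum r a b e₀ e + consSum r a' b' e₀ e := by
  simp only [consSum, ← Finset.sum_add_distrib, ← Finsupp.single_add]
  refine Finset.sum_congr rfl fun l _ => ?_
  cases l using Fin.cases <;> simp

noncomputable def derKₗ (m₀ : ℤ) (m : Fin r → ℤ) (i : Fin r) : CF r →ₗ[ℂ] CF r :=
  Finsupp.lsum ℂ fun jq => LinearMap.toSpanSingleton ℂ (CF r)
    (Finsupp.single (jq.1, (m₀ + jq.2.1, m + jq.2.2)) ((jq.2.2 i : ℤ) : ℂ)
      + (if jq.1 = i.succ then consSum r m₀ m (m₀ + jq.2.1) (m + jq.2.2) else 0))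

theorem derKₗ_apply (m₀ : ℤ) (m : Fin r → ℤ) (i : Fin r) (u : CF r) :
    derKₗ m₀ m i u = derK r m₀ m i u :=
  rfl

theorem derKₗ_consSum (m₀ a e₀ : ℤ) (m b e : Fin r → ℤ) (i : Fin r) :
    derKₗ m₀ m i (consSum r a b e₀ e)
      = ((e i : ℤ) : ℂ) • consSum r a b (m₀ + e₀) (m + e)
        + ((b i : ℤ) : ℂ) • consSum r m₀ m (m₀ + e₀) (m + e) := by
  simp only [consSum, map_sum, derKₗ, Finsupp.lsum_single, LinearMap.toSpanSingleton_apply,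
    smul_add, Finset.sum_add_distrib, Finset.smul_sum, Finsupp.smul_single, smul_eq_mul, mul_comm,
    smul_ite, smul_zero, Finset.sum_ite_eq', Finset.mem_univ, if_true, Fin.cons_succ]

theorem derKₗ_relElem (m₀ m₀' : ℤ) (m m' : Fin r → ℤ) (i : Fin r) :
    derKₗ m₀ m i (relElem r m₀' m') = ((m' i : ℤ) : ℂ) • relElem r (m₀ + m₀') (m + m') := by
  rw [relElem, derKₗ_consSum, relElem, ← smul_add, ← consSum_add, add_comm m₀', add_comm m']

theorem RR_le_comap_derKₗ (m₀ : ℤ) (m : Fin r → ℤ) (i : Fin r) :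
    RR r ≤ (RR r).comap (derKₗ m₀ m i) := by
  rw [RR, Submodule.span_le]
  rintro _ ⟨m₀', m', rfl⟩
  rw [SetLike.mem_coe, Submodule.mem_comap, derKₗ_relElem]
  exact Submodule.smul_mem _ _ (Submodule.subset_span ⟨_, _, rfl⟩)

variable (g : Type*) [LieRing g] [LieAlgebra ℂ g]

noncomputable def derGₗ (m₀ : ℤ) (m : Fin r → ℤ) (i : Fin r) :
    (TorIdx r →₀ g) →ₗ[ℂ] (TorIdx r →₀ g) :=
  Finsupp.lsum ℂ fun q => Finsupp.lsingle (m₀ + q.1, m + q.2) ∘ₗ (((q.2 i : ℤ) : ℂ) • LinearMap.id)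

theorem derGₗ_apply (m₀ : ℤ) (m : Fin r → ℤ) (i : Fin r) (f : TorIdx r →₀ g) :
    derGₗ g m₀ m i f = derG r g m₀ m i f :=
  rfl

theorem derGₗ_single (m₀ : ℤ) (m : Fin r → ℤ) (i : Fin r) (q : TorIdx r) (a : g) :
    derGₗ g m₀ m i (Finsupp.single q a)
      = Finsupp.single (m₀ + q.1, m + q.2) (((q.2 i : ℤ) : ℂ) • a) :=
  Finsupp.lsum_single _ _ _ _

noncomputable def ggPartₗ : (TorIdx r →₀ g) →ₗ[ℂ] (TorIdx r →₀ g) →ₗ[ℂ] (TorIdx r →₀ g) :=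
  Finsupp.lsum₂ fun p q =>
    (LieModule.toEnd ℂ g g : g →ₗ[ℂ] Module.End ℂ g).compr₂
      (Finsupp.lsingle (p.1 + q.1, p.2 + q.2))

theorem ggPartₗ_apply (f f' : TorIdx r →₀ g) : ggPartₗ g f f' = ggPart r g f f' := by
  rw [ggPartₗ, Finsupp.lsum₂_apply]
  rfl

theorem ggPartₗ_single (p q : TorIdx r) (a b : g) :
    ggPartₗ g (Finsupp.single p a) (Finsupp.single q b)
      = Finsupp.single (p.1 + q.1, p.2 + q.2) ⁅a, b⁆ :=
  Finsupp.lsum₂_single _ _ _ _ _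

noncomputable def centPartₗ (k : ℂ) (B : g →ₗ[ℂ] g →ₗ[ℂ] ℂ) :
    (TorIdx r →₀ g) →ₗ[ℂ] (TorIdx r →₀ g) →ₗ[ℂ] CF r :=
  Finsupp.lsum₂ fun p q =>
    (k • B).compr₂ (LinearMap.toSpanSingleton ℂ (CF r) (consSum r p.1 p.2 (p.1 + q.1) (p.2 + q.2)))

theorem centPartₗ_apply (k : ℂ) (B : g →ₗ[ℂ] g →ₗ[ℂ] ℂ) (f f' : TorIdx r →₀ g) :
    centPartₗ g k B f f' = centPart r g k B f f' := by
  rw [centPartₗ, Finsupp.lsum₂_apply]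
  rfl

theorem centPartₗ_single (k : ℂ) (B : g →ₗ[ℂ] g →ₗ[ℂ] ℂ) (p q : TorIdx r) (a b : g) :
    centPartₗ g k B (Finsupp.single p a) (Finsupp.single q b)
      = (k * B a b) • consSum r p.1 p.2 (p.1 + q.1) (p.2 + q.2) :=
  Finsupp.lsum₂_single _ _ _ _ _

theorem derG_ggPart (m₀ : ℤ) (m : Fin r → ℤ) (i : Fin r) (f f' : TorIdx r →₀ g) :
    derG r g m₀ m i (ggPart r g f f')
      = ggPart r g (derG r g m₀ m i f) f' + ggPart r g f (derG r g m₀ m i f') := by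
  simp only [← ggPartₗ_apply, ← derGₗ_apply]
  refine Finsupp.leibniz_of_single (fun p a q b => ?_) f f'
  simp only [ggPartₗ_single, derGₗ_single, smul_lie, lie_smul, Pi.add_apply, Int.cast_add,
    add_smul]
  rw [add_assoc m₀, add_assoc m, add_left_comm p.1, add_left_comm p.2, Finsupp.single_add]

theorem derK_centPart (k : ℂ) (B : g →ₗ[ℂ] g →ₗ[ℂ] ℂ) (m₀ : ℤ) (m : Fin r → ℤ) (i : Fin r)
    (f f' : TorIdx r →₀ g) :
    derK r m₀ m i (centPart r g k B f f')
      = centPart r g k B (derG r g m₀ m i f) f' + centPart r g k B f (derG r g m₀ m i f') := by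
  simp only [← centPartₗ_apply, ← derGₗ_apply, ← derKₗ_apply]
  refine Finsupp.leibniz_of_single (fun p a q b => ?_) f f'
  simp only [centPartₗ_single, derGₗ_single, map_smul, derKₗ_consSum, Pi.add_apply,
    Int.cast_add, LinearMap.smul_apply, smul_eq_mul]
  rw [add_assoc m₀, add_assoc m, add_left_comm p.1, add_left_comm p.2, consSum_add]
  module

end

theorem toroidal_derivation_general
    (r : ℕ)
    (g : Type*) [LieRing g] [LieAlgebra ℂ g]
    (k : ℂ) (B : g →ₗ[ℂ] g →ₗ[ℂ] ℂ)
    (m₀ : ℤ) (m : Fin r → ℤ) (i : Fin r) :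
    (∀ u ∈ RR r, derK r m₀ m i u ∈ RR r) ∧
    ∃ D : (TorIdx r →₀ g) × (CF r ⧸ RR r) → (TorIdx r →₀ g) × (CF r ⧸ RR r),
      (∀ (f : TorIdx r →₀ g) (u : CF r),
        D (f, (RR r).mkQ u) = (derG r g m₀ m i f, (RR r).mkQ (derK r m₀ m i u))) ∧
      (∀ x y, D (torBracket r g k B x y)
        = torBracket r g k B (D x) y + torBracket r g k B x (D y)) := by
  have hRR := RR_le_comap_derKₗ m₀ m i
  refine ⟨fun u hu => hRR hu,
    fun x => (derG r g m₀ m i x.1, (RR r).mapQ (RR r) (derKₗ m₀ m i) hRR x.2),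
    fun f u => rfl, fun x y => Prod.ext (derG_ggPart g m₀ m i x.1 y.1) ?_⟩
  exact (congrArg (RR r).mkQ (derK_centPart g k B m₀ m i x.1 y.1)).trans (map_add _ _ _)

/-- for each `1 ≤ i ≤ r`, `m₀ ∈ ℤ`, `m ∈ ℤ^r`, the endomorphism
`D` of `L̂'_{r+1,k}(g)` given by `D(a ⊗ t₀^{n₀}t^n) = n_i a ⊗ t₀^{m₀+n₀}t^{m+n}`
and `D(K_j ⊗ t₀^{n₀}t^n) = n_i K_j ⊗ t₀^{m₀+n₀}t^{m+n}
+ δ_{i,j} Σ_l m_l K_l ⊗ t₀^{m₀+n₀}t^{m+n}` is well defined on the quotient `K`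
(it maps the relation subspace into itself, hence descends to the quotient),
and it is a derivation of the toroidal Lie algebra of level `k`. -/
theorem toroidal_derivation
    (r : ℕ) (hr : 1 ≤ r)
    (g : Type*) [LieRing g] [LieAlgebra ℂ g]
    (k : ℂ) (B : g →ₗ[ℂ] g →ₗ[ℂ] ℂ)
    (hsymm : ∀ a b : g, B a b = B b a)
    (hinv : ∀ a b c : g, B ⁅a, b⁆ c = B a ⁅b, c⁆)
    (m₀ : ℤ) (m : Fin r → ℤ) (i : Fin r) :
    (∀ u ∈ RR r, derK r m₀ m i u ∈ RR r) ∧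
    ∃ D : (TorIdx r →₀ g) × (CF r ⧸ RR r) → (TorIdx r →₀ g) × (CF r ⧸ RR r),
      (∀ (f : TorIdx r →₀ g) (u : CF r),
        D (f, (RR r).mkQ u) = (derG r g m₀ m i f, (RR r).mkQ (derK r m₀ m i u))) ∧
      (∀ x y, D (torBracket r g k B x y)
        = torBracket r g k B (D x) y + torBracket r g k B x (D y)) :=
  toroidal_derivation_general r g k B m₀ m i
end

section
/- Fix integers r ≥ 1 and N ≥ 1. Inside the free module F = ⊕_{i=0}^r ℂK_i ⊗ O, let R be the subspace spanned by the elements Σ_{i=0}^r m_i K_i ⊗ t₀^{m₀} t^m over all m₀ ∈ ℤ, m = (m₁,…,m_r) ∈ ℤ^r, let S be the subspace spanned by the elements K_i ⊗ t₀^{N m₀} t^m over all 0 ≤ i ≤ r, m₀ ∈ ℤ, m ∈ ℤ^r, and let R' be the subspace spanned by the elements (N m₀ K_0 + Σ_{i=1}^r p_i K_i) ⊗ t₀^{N m₀} t^p over all m₀ ∈ ℤ, p ∈ ℤ^r. Then S ∩ R = R'. Consequently, the natural linear map from the quotient K' = S / R' to the quotient K = F / R is injective, identifying K' with the image of S in K.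 -/
/-- The subspace `S` spanned by the basis elements `K_i ⊗ t₀^{N m₀} t^m`. -/
noncomputable def SN (r N : ℕ) : Submodule ℂ (CF r) :=
  Submodule.span ℂ {x : CF r | ∃ (i : Fin (r + 1)) (m₀ : ℤ) (m : Fin r → ℤ),
    x = Finsupp.single (i, ((N : ℤ) * m₀, m)) 1}

/-- The subspace `R'` spanned by the elements
`(N m₀ K_0 + Σ_{i=1}^r p_i K_i) ⊗ t₀^{N m₀} t^p`. -/
noncomputable def RN (r N : ℕ) : Submodule ℂ (CF r) :=
  Submodule.span ℂ {x : CF r | ∃ (m₀ : ℤ) (p : Fin r → ℤ),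
    x = relElem r ((N : ℤ) * m₀) p}

/-- The projection killing all coordinates whose `t₀`-degree is not divisible by `N`. -/
noncomputable def goodProj (r N : ℕ) (x : CF r) : CF r :=
  x.filter (fun q => (N : ℤ) ∣ q.2.1)

lemma goodProj_add (r N : ℕ) (x y : CF r) :
    goodProj r N (x + y) = goodProj r N x + goodProj r N y := Finsupp.filter_add

lemma goodProj_smul (r N : ℕ) (c : ℂ) (x : CF r) :
    goodProj r N (c • x) = c • goodProj r N x := Finsupp.filter_smul

lemma goodProj_single_of_dvd (r N : ℕ) (i : Fin (r+1)) (e₀ : ℤ) (e : Fin r → ℤ)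
    (h : (N : ℤ) ∣ e₀) (c : ℂ) :
    goodProj r N (Finsupp.single (i, (e₀, e)) c) = Finsupp.single (i, (e₀, e)) c :=
  Finsupp.filter_single_of_pos _ h

lemma goodProj_single_of_not_dvd (r N : ℕ) (i : Fin (r+1)) (e₀ : ℤ) (e : Fin r → ℤ)
    (h : ¬ (N : ℤ) ∣ e₀) (c : ℂ) :
    goodProj r N (Finsupp.single (i, (e₀, e)) c) = 0 :=
  Finsupp.filter_single_of_neg _ h

lemma goodProj_consSum (r N : ℕ) (m₀ : ℤ) (m : Fin r → ℤ) (e₀ : ℤ) (e : Fin r → ℤ) :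
    goodProj r N (consSum r m₀ m e₀ e) =
      if (N : ℤ) ∣ e₀ then consSum r m₀ m e₀ e else 0 := by
  unfold consSum goodProj
  rw [Finsupp.filter_sum]
  by_cases h : (N : ℤ) ∣ e₀
  · simp only [h, if_true]
    exact Finset.sum_congr rfl fun l _ => Finsupp.filter_single_of_pos _ h
  · simp only [h, if_false]
    exact Finset.sum_eq_zero fun l _ => Finsupp.filter_single_of_neg _ h

/-- Each `relElem` of `S`-degree lies in `SN`. -/
lemma consSum_mem_SN (r N : ℕ) (m₀ : ℤ) (m : Fin r → ℤ) (e₀ : ℤ) (e : Fin r → ℤ)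
    (h : (N : ℤ) ∣ e₀) : consSum r m₀ m e₀ e ∈ SN r N := by
  unfold consSum
  refine Submodule.sum_mem _ fun l _ => ?_
  obtain ⟨k, hk⟩ := h
  have : (Finsupp.single ((l, (e₀, e)) : Fin (r+1) × TorIdx r)
      (((Fin.cons m₀ m : Fin (r + 1) → ℤ) l : ℤ) : ℂ))
      = (((Fin.cons m₀ m : Fin (r + 1) → ℤ) l : ℤ) : ℂ) •
        Finsupp.single (l, (e₀, e)) (1 : ℂ) := by
      rw [Finsupp.smul_single, smul_eq_mul, mul_one]
  rw [this]
  exact Submodule.smul_mem _ _ (Submodule.subset_span ⟨l, k, e, by rw [hk]⟩)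

lemma goodProj_eq_self_of_mem_SN (r N : ℕ) {x : CF r} (hx : x ∈ SN r N) :
    goodProj r N x = x := by
  refine Submodule.span_induction ?_ ?_ ?_ ?_ hx
  · rintro y ⟨i, m₀, m, rfl⟩
    exact goodProj_single_of_dvd r N i _ m ⟨m₀, rfl⟩ 1
  · exact Finsupp.filter_zero _
  · intro a b _ _ ha hb; rw [goodProj_add, ha, hb]
  · intro c a _ ha; rw [goodProj_smul, ha]

lemma goodProj_mem_RN_of_mem_RR (r N : ℕ) (hN : 0 < N) {x : CF r} (hx : x ∈ RR r) :
    goodProj r N x ∈ RN r N := by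
  refine Submodule.span_induction ?_ ?_ ?_ ?_ hx
  · rintro y ⟨m₀, m, rfl⟩
    rw [relElem, goodProj_consSum]
    by_cases h : (N : ℤ) ∣ m₀
    · obtain ⟨k, hk⟩ := h
      rw [if_pos ⟨k, hk⟩]
      exact Submodule.subset_span ⟨k, m, by rw [relElem, hk]⟩
    · rw [if_neg h]; exact Submodule.zero_mem _
  · rw [show goodProj r N 0 = 0 from Finsupp.filter_zero _]; exact Submodule.zero_mem _
  · intro a b _ _ ha hb; rw [goodProj_add]; exact Submodule.add_mem _ ha hb
  · intro c a _ ha; rw [goodProj_smul]; exact Submodule.smul_mem _ _ ha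

/-- inside the free module `F = ⊕_{i=0}^r ℂK_i ⊗ O` one has
`S ∩ R = R'`; consequently the natural linear map `K' = S/R' → K = F/R` is
injective (equivalently, an element of `S` lying in `R` already lies in `R'`),
identifying `K'` with the image of `S` in `K`. -/
theorem S_inf_R_eq_R' (r : ℕ) (hr : 1 ≤ r) (N : ℕ) (hN : 0 < N) :
    SN r N ⊓ RR r = RN r N ∧
    (∀ x ∈ SN r N, x ∈ RR r → x ∈ RN r N) := by
  have key : ∀ x ∈ SN r N, x ∈ RR r → x ∈ RN r N := by
    intro x hS hR
    have := goodProj_mem_RN_of_mem_RR r N hN hR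
    rwa [goodProj_eq_self_of_mem_SN r N hS] at this
  constructor
  · apply le_antisymm
    · rintro x ⟨hS, hR⟩; exact key x hS hR
    · rw [RN, Submodule.span_le]
      rintro y ⟨m₀, p, rfl⟩
      show relElem r ((N : ℤ) * m₀) p ∈ SN r N ⊓ RR r
      rw [Submodule.mem_inf, relElem]
      exact ⟨consSum_mem_SN r N _ p _ p ⟨m₀, rfl⟩,
        Submodule.subset_span ⟨(N : ℤ) * m₀, p, rfl⟩⟩
  · exact key
end
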